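/- Let F be a field of characteristic 0 and let W = Der_F(F[t]) be the Witt algebra. Then the centroid of W is F·id: every F-linear map χ : W → W satisfying χ([a,b]) = [χ(a), b] = [a, χ(b)] for all a, b ∈ W is a scalar multiple of the identity. -/

import Mathlib

/-!
Every derivation of `F[t]` is `r ∂` with `∂ = d/dt`, and `⁅p ∂, q ∂⁆ = (p q' - q p') ∂`.
Applying `χ ⁅a, b⁆ = ⁅a, χ b⁆` to `⁅t ∂, ∂⁆ = -∂` shows that `χ ∂ = f ∂` with `t f' = 0`, so
`χ ∂ = c ∂` for a scalar `c`. In characteristic `0` every polynomial has an antiderivative, so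
`ad ∂` is surjective, and `χ ⁅∂, b⁆ = ⁅χ ∂, b⁆ = c ⁅∂, b⁆` gives `χ = c • id`.
-/

open Polynomial

namespace Polynomial

lemma mkDerivation_apply_X_self {R : Type*} [CommSemiring R] (D : Derivation R R[X] R[X]) :
    mkDerivation R (D X) = D :=
  derivation_ext (mkDerivation_X R (D X))

lemma lie_mkDerivation {R : Type*} [CommRing R] (p q : R[X]) :
    ⁅mkDerivation R p, mkDerivation R q⁆ =
      mkDerivation R (p * derivative q - q * derivative p) := by
  apply derivation_ext
  simp only [Derivation.commutator_apply, mkDerivation_apply, derivative_X, smul_eq_mul,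
    one_mul]
  ring

lemma exists_derivative_eq {F : Type*} [Field F] [CharZero F] (r : F[X]) :
    ∃ q : F[X], derivative q = r := by
  induction r using Polynomial.induction_on' with
  | add p q hp hq =>
    obtain ⟨a, rfl⟩ := hp
    obtain ⟨b, rfl⟩ := hq
    exact ⟨a + b, derivative_add⟩
  | monomial n a =>
    refine ⟨C (a / (n + 1)) * X ^ (n + 1), ?_⟩
    have hn : ((n : F) + 1) ≠ 0 := Nat.cast_add_one_ne_zero n
    rw [derivative_C_mul_X_pow, ← C_mul_X_pow_eq_monomial]
    congr 2
    push_cast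
    field_simp

lemma exists_lie_mkDerivation_one_eq {F : Type*} [Field F] [CharZero F]
    (D : Derivation F F[X] F[X]) : ∃ E, ⁅mkDerivation F (1 : F[X]), E⁆ = D := by
  obtain ⟨q, hq⟩ := exists_derivative_eq (D X)
  refine ⟨mkDerivation F q, ?_⟩
  rw [lie_mkDerivation, derivative_one, mul_zero, sub_zero, one_mul, hq,
    mkDerivation_apply_X_self]

lemma exists_map_mkDerivation_one_eq_smul {F : Type*} [Field F] [CharZero F]
    (χ : Derivation F F[X] F[X] →ₗ[F] Derivation F F[X] F[X])
    (hχ : ∀ a b : Derivation F F[X] F[X], χ ⁅a, b⁆ = ⁅a, χ b⁆) :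
    ∃ c : F, χ (mkDerivation F (1 : F[X])) = c • mkDerivation F (1 : F[X]) := by
  set f := χ (mkDerivation F (1 : F[X])) X
  have hχf : χ (mkDerivation F (1 : F[X])) = mkDerivation F f :=
    (mkDerivation_apply_X_self _).symm
  have hbracket :
      ⁅mkDerivation F (X : F[X]), mkDerivation F (1 : F[X])⁆ = -mkDerivation F (1 : F[X]) := by
    rw [lie_mkDerivation, derivative_one, derivative_X, mul_zero, one_mul, zero_sub, map_neg]
  have hXf : X * derivative f = 0 := by
    have h := congrArg (fun D : Derivation F F[X] F[X] => D X)
      (hχ (mkDerivation F (X : F[X])) (mkDerivation F (1 : F[X])))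
    simp only [hbracket, map_neg, hχf, lie_mkDerivation, Derivation.neg_apply, mkDerivation_X,
      derivative_X] at h
    linear_combination -h
  have hf : derivative f = 0 := (mul_eq_zero.mp hXf).resolve_left X_ne_zero
  obtain ⟨c, hc⟩ : ∃ c, f = C c := ⟨_, eq_C_of_derivative_eq_zero hf⟩
  refine ⟨c, ?_⟩
  rw [hχf, hc, ← map_smul, smul_eq_C_mul, mul_one]

end Polynomial

/-- In characteristic 0, the centroid of the Witt algebra
`W = Der_F(F[t])` is `F·id`: any `F`-linear `χ : W → W` with
`χ⁅a,b⁆ = ⁅χ a, b⁆ = ⁅a, χ b⁆` is a scalar multiple of the identity. -/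
theorem stmt12 {F : Type*} [Field F] [CharZero F]
    (χ : Derivation F F[X] F[X] →ₗ[F] Derivation F F[X] F[X])
    (h1 : ∀ a b : Derivation F F[X] F[X], χ ⁅a, b⁆ = ⁅χ a, b⁆)
    (h2 : ∀ a b : Derivation F F[X] F[X], χ ⁅a, b⁆ = ⁅a, χ b⁆) :
    ∃ c : F, ∀ a : Derivation F F[X] F[X], χ a = c • a := by
  obtain ⟨c, hc⟩ := exists_map_mkDerivation_one_eq_smul χ h2
  refine ⟨c, fun a => ?_⟩
  obtain ⟨b, rfl⟩ := exists_lie_mkDerivation_one_eq a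
  rw [h1, hc]
  exact smul_lie c (mkDerivation F (1 : F[X])) b
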